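/- Reversibility of × and ÷ in HL: (1) if H → C is derivable in HL and e₀ ∈ E_H is labeled ×(M), then H[e₀/M] → C is derivable; (2) if H → N÷D is derivable in HL and e₀ is the $-labeled edge of D, then D[e₀/H] → N is derivable. -/

import Mathlib

universe u

/-- A hypergraph labeled by elements of `α`: nodes `V`, hyperedges `E`, attachment
function `att`, labeling `lab`, and a sequence `ext` of external nodes. -/
structure HG (α : Type u) where
  V : Type
  E : Type
  att : E → List V
  lab : E → α
  ext : List V

namespace HG

variable {α : Type u}

/-- `type(G)` is the number of external nodes of `G`. -/
def type (G : HG α) : ℕ := G.ext.length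

/-- Hyperedge replacement `G[e₀/H]`: remove `e₀`, insert a disjoint copy of `H`, and
fuse the `i`-th external node of `H` with the `i`-th attachment node of `e₀`. -/
noncomputable def repl (G : HG α) (e₀ : G.E) (H : HG α)
    (h : (G.att e₀).length = H.ext.length) : HG α where
  V := G.V ⊕ {v : H.V // v ∉ H.ext}
  E := {e : G.E // e ≠ e₀} ⊕ H.E
  att := fun e =>
    match e with
    | Sum.inl e => (G.att e.1).map Sum.inl
    | Sum.inr e => (H.att e).map fun v =>
        letI : DecidableEq H.V := Classical.decEq _
        if hv : v ∈ H.ext then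
          Sum.inl ((G.att e₀).get ⟨H.ext.idxOf v, by
            rw [h]; exact List.idxOf_lt_length_iff.mpr hv⟩)
        else Sum.inr ⟨v, hv⟩
  lab := fun e =>
    match e with
    | Sum.inl e => G.lab e.1
    | Sum.inr e => H.lab e
  ext := G.ext.map Sum.inl

/-- Simultaneous replacement `M[m₁/F m₁, …, m_l/F m_l]` of all edges of `M` by the
hypergraphs of the family `F`. -/
noncomputable def replAll (M : HG α) (F : M.E → HG α)
    (h : ∀ e, (M.att e).length = (F e).ext.length) : HG α where
  V := M.V ⊕ Σ e : M.E, {v : (F e).V // v ∉ (F e).ext}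
  E := Σ e : M.E, (F e).E
  att := fun e => ((F e.1).att e.2).map fun v =>
    letI : DecidableEq (F e.1).V := Classical.decEq _
    if hv : v ∈ (F e.1).ext then
      Sum.inl ((M.att e.1).get ⟨(F e.1).ext.idxOf v, by
        rw [h]; exact List.idxOf_lt_length_iff.mpr hv⟩)
    else Sum.inr ⟨e.1, v, hv⟩
  lab := fun e => (F e.1).lab e.2
  ext := M.ext.map Sum.inl

/-- Isomorphism of hypergraphs: bijections on nodes and edges commuting with
attachment, labeling and external nodes. -/
def Iso (G H : HG α) : Prop :=
  ∃ (fV : G.V ≃ H.V) (fE : G.E ≃ H.E),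
    (∀ e, H.att (fE e) = (G.att e).map fV) ∧
    (∀ e, H.lab (fE e) = G.lab e) ∧
    H.ext = G.ext.map fV

end HG

/-- A denominator graph `D` for a division type `N ÷ D`: a hypergraph together with a
distinguished `$`-edge, represented by the attachment sequence `hole` of the `$`-edge;
the remaining edges are collected in `E` and labeled by `lab`. -/
structure Den (α : Type u) where
  V : Type
  E : Type
  att : E → List V
  lab : E → α
  hole : List V
  ext : List V

namespace Den

variable {α : Type u}

/-- `D[e₀/F]`: the result of replacing the `$`-edge of the denominator `D` by the
hypergraph `F` (fusing the `i`-th external node of `F` with the `i`-th node of the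
hole's attachment sequence). -/
noncomputable def fill (D : Den α) (F : HG α)
    (h : D.hole.length = F.ext.length) : HG α where
  V := D.V ⊕ {v : F.V // v ∉ F.ext}
  E := D.E ⊕ F.E
  att := fun e =>
    match e with
    | Sum.inl e => (D.att e).map Sum.inl
    | Sum.inr e => (F.att e).map fun v =>
        letI : DecidableEq F.V := Classical.decEq _
        if hv : v ∈ F.ext then
          Sum.inl (D.hole.get ⟨F.ext.idxOf v, by
            rw [h]; exact List.idxOf_lt_length_iff.mpr hv⟩)
        else Sum.inr ⟨v, hv⟩
  lab := fun e =>
    match e with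
    | Sum.inl e => D.lab e
    | Sum.inr e => F.lab e
  ext := D.ext.map Sum.inl

/-- `D[d₀ := t][d₁/F d₁, …, d_k/F d_k]`: the hypergraph obtained from the denominator
`D` by labeling its `$`-edge with `t` and simultaneously replacing every other edge
`d` of `D` by the hypergraph `F d`. -/
noncomputable def expand (D : Den α) (t : α) (F : D.E → HG α)
    (h : ∀ e, (D.att e).length = (F e).ext.length) : HG α where
  V := D.V ⊕ Σ e : D.E, {v : (F e).V // v ∉ (F e).ext}
  E := PUnit ⊕ Σ e : D.E, (F e).E
  att := fun e =>
    match e with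
    | Sum.inl _ => D.hole.map Sum.inl
    | Sum.inr e => ((F e.1).att e.2).map fun v =>
        letI : DecidableEq (F e.1).V := Classical.decEq _
        if hv : v ∈ (F e.1).ext then
          Sum.inl ((D.att e.1).get ⟨(F e.1).ext.idxOf v, by
            rw [h]; exact List.idxOf_lt_length_iff.mpr hv⟩)
        else Sum.inr ⟨e.1, v, hv⟩
  lab := fun e =>
    match e with
    | Sum.inl _ => t
    | Sum.inr e => (F e.1).lab e.2
  ext := D.ext.map Sum.inl

end Den

/-- Types of the hypergraph Lambek calculus `HL`: primitive types `prim p k` (the `p`-th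
primitive type of arity `k`), divisions `N ÷ D` (where `D` is a denominator graph whose
`$`-edge is its hole), and products `×(M)` for a type-labeled hypergraph `M`. -/
inductive HLTp : Type 1 where
  | prim : ℕ → ℕ → HLTp
  | div : HLTp → Den HLTp → HLTp
  | mul : HG HLTp → HLTp

/-- The arity (`type`) of a hypergraph Lambek type. -/
def HLTp.arity : HLTp → ℕ
  | .prim _ k => k
  | .div _ D => D.hole.length
  | .mul M => M.ext.length

/-- The handle `T^•` of a type `T`: a single edge labeled `T` attached to
`arity T` distinct nodes, all of them external. -/
def HLTp.handle (T : HLTp) : HG HLTp where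
  V := Fin T.arity
  E := PUnit
  att := fun _ => List.finRange T.arity
  lab := fun _ => T
  ext := List.finRange T.arity

/-- Derivability in the hypergraph Lambek calculus `HL`: the axiom `p^• → p` for
primitive `p`, the rules `(÷→)`, `(→÷)`, `(×→)`, `(→×)`, and invariance under
isomorphism of antecedents. -/
inductive HL : HG HLTp → HLTp → Prop where
  | ax (p k : ℕ) : HL (HLTp.prim p k).handle (HLTp.prim p k)
  | div_l (H : HG HLTp) (A : HLTp) (e : H.E) (N : HLTp) (D : Den HLTp)
      (F : D.E → HG HLTp)
      (hlab : H.lab e = N)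
      (hrepl : (H.att e).length = D.ext.length)
      (hF : ∀ d, (D.att d).length = (F d).ext.length) :
      HL H A → (∀ d, HL (F d) (D.lab d)) →
      HL (H.repl e (D.expand (HLTp.div N D) F hF)
        (by simpa [Den.expand] using hrepl)) A
  | div_r (N : HLTp) (D : Den HLTp) (F : HG HLTp)
      (h : D.hole.length = F.ext.length) :
      HL (D.fill F h) N → HL F (HLTp.div N D)
  | mul_l (G : HG HLTp) (A : HLTp) (e : G.E) (M : HG HLTp)
      (hlab : G.lab e = HLTp.mul M) (h : (G.att e).length = M.ext.length) :
      HL (G.repl e M h) A → HL G A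
  | mul_r (M : HG HLTp) (F : M.E → HG HLTp)
      (h : ∀ e, (M.att e).length = (F e).ext.length) :
      (∀ e, HL (F e) (M.lab e)) → HL (M.replAll F h) (HLTp.mul M)
  | iso (G G' : HG HLTp) (A : HLTp) : HG.Iso G G' → HL G A → HL G' A

section Helpers

theorem indexOf_map_inj {β γ : Type*} [DecidableEq β] [DecidableEq γ] {f : β → γ}
    (hf : Function.Injective f) (l : List β) (a : β) :
    (l.map f).idxOf (f a) = l.idxOf a := by
  induction l with
  | nil => rfl
  | cons b t ih =>
      simp only [List.map_cons, List.idxOf_cons, ih]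
      by_cases hba : b = a
      · simp [hba]
      · have h1 : (f b == f a) = false := by simp [hf.eq_iff, hba]
        have h2 : (b == a) = false := by simp [hba]
        rw [h1, h2]

noncomputable abbrev cIdx {β : Type*} (a : β) (l : List β) : ℕ :=
  letI : DecidableEq β := Classical.decEq β
  l.idxOf a

theorem cIdx_lt {β : Type*} {a : β} {l : List β} (h : a ∈ l) : cIdx a l < l.length := by
  classical
  exact List.idxOf_lt_length_iff.mpr h

theorem cIdx_map {β γ : Type*} {f : β → γ} (hf : Function.Injective f)
    (l : List β) (a : β) : cIdx (f a) (l.map f) = cIdx a l := by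
  letI : DecidableEq β := Classical.decEq β
  letI : DecidableEq γ := Classical.decEq γ
  exact indexOf_map_inj hf l a

theorem get_map' {β γ : Type*} (f : β → γ) (l : List β) (i : ℕ)
    (hi : i < (l.map f).length) :
    (l.map f).get ⟨i, hi⟩ = f (l.get ⟨i, by simpa using hi⟩) := by simp

theorem get_list_congr {β : Type*} {l l' : List β} (hll : l = l') (i : ℕ) (hi : i < l.length) :
    l.get ⟨i, hi⟩ = l'.get ⟨i, hll ▸ hi⟩ := by subst hll; rfl

theorem get_congr {β : Type*} (l : List β) {i j : ℕ} (hij : i = j) (hi : i < l.length) :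
    l.get ⟨i, hi⟩ = l.get ⟨j, hij ▸ hi⟩ := by subst hij; rfl

end Helpers

namespace HG

variable {α : Type u}

theorem iso_refl (G : HG α) : Iso G G :=
  ⟨Equiv.refl _, Equiv.refl _, fun e => by simp, fun e => by simp, by simp⟩

theorem iso_symm {G H : HG α} (h : Iso G H) : Iso H G := by
  obtain ⟨fV, fE, hatt, hlab, hext⟩ := h
  refine ⟨fV.symm, fE.symm, fun e => ?_, fun e => ?_, ?_⟩
  · have := hatt (fE.symm e)
    rw [Equiv.apply_symm_apply] at this
    rw [this, List.map_map]
    simp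
  · have := hlab (fE.symm e)
    rw [Equiv.apply_symm_apply] at this
    exact this.symm
  · rw [hext, List.map_map]; simp

theorem repl_iso_right (G : HG α) (e : G.E) {K K' : HG α} (hiso : Iso K K')
    (h : (G.att e).length = K.ext.length) (h' : (G.att e).length = K'.ext.length) :
    Iso (G.repl e K h) (G.repl e K' h') := by
  classical
  obtain ⟨fV, fE, hatt, hlab, hext⟩ := hiso
  have hinj : Function.Injective fV := fV.injective
  have hmem : ∀ v : K.V, fV v ∈ K'.ext ↔ v ∈ K.ext := by
    intro v; erw [hext]; simp [hinj.eq_iff]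
  have hidx : ∀ v : K.V, K'.ext.idxOf (fV v) = K.ext.idxOf v := by
    intro v; erw [hext]; exact indexOf_map_inj hinj _ _
  refine ⟨Equiv.sumCongr (Equiv.refl G.V)
      (fV.subtypeEquiv fun v => not_congr (hmem v).symm),
    Equiv.sumCongr (Equiv.refl _) fE, fun ed => ?_, fun ed => ?_, ?_⟩
  · rcases ed with e'|k
    · show (G.att e'.1).map Sum.inl = ((G.att e'.1).map Sum.inl).map _
      erw [List.map_map]; apply List.map_congr_left; intro v _; rfl
    · show (K'.att (fE k)).map _ = ((K.att k).map _).map _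
      erw [hatt k, List.map_map, List.map_map]
      apply List.map_congr_left; intro v _
      unfold Function.comp; beta_reduce
      by_cases hm : v ∈ K.ext
      · erw [dif_pos hm, dif_pos ((hmem v).mpr hm)]
        exact congrArg Sum.inl (get_congr _ (hidx v) _)
      · erw [dif_neg hm, dif_neg (fun hc => hm ((hmem v).mp hc))]
        rfl
  · rcases ed with e'|k
    · rfl
    · exact hlab k
  · show G.ext.map Sum.inl = (G.ext.map Sum.inl).map _
    erw [List.map_map]; apply List.map_congr_left; intro v _; rfl

end HG
namespace Den

variable {α : Type u}

theorem fill_iso_right (D : Den α) {K K' : HG α} (hiso : HG.Iso K K')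
    (h : D.hole.length = K.ext.length) (h' : D.hole.length = K'.ext.length) :
    HG.Iso (D.fill K h) (D.fill K' h') := by
  classical
  obtain ⟨fV, fE, hatt, hlab, hext⟩ := hiso
  have hinj : Function.Injective fV := fV.injective
  have hmem : ∀ v : K.V, fV v ∈ K'.ext ↔ v ∈ K.ext := by
    intro v; erw [hext]; simp [hinj.eq_iff]
  have hidx : ∀ v : K.V, K'.ext.idxOf (fV v) = K.ext.idxOf v := by
    intro v; erw [hext]; exact indexOf_map_inj hinj _ _
  refine ⟨Equiv.sumCongr (Equiv.refl D.V)
      (fV.subtypeEquiv fun v => not_congr (hmem v).symm),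
    Equiv.sumCongr (Equiv.refl _) fE, fun ed => ?_, fun ed => ?_, ?_⟩
  · rcases ed with e'|k
    · show (D.att e').map Sum.inl = ((D.att e').map Sum.inl).map _
      erw [List.map_map]; apply List.map_congr_left; intro v _; rfl
    · show (K'.att (fE k)).map _ = ((K.att k).map _).map _
      erw [hatt k, List.map_map, List.map_map]
      apply List.map_congr_left; intro v _
      unfold Function.comp; beta_reduce
      by_cases hm : v ∈ K.ext
      · erw [dif_pos hm, dif_pos ((hmem v).mpr hm)]
        exact congrArg Sum.inl (get_congr _ (hidx v) _)
      · erw [dif_neg hm, dif_neg (fun hc => hm ((hmem v).mp hc))]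
        rfl
  · rcases ed with e'|k
    · rfl
    · exact hlab k
  · show D.ext.map Sum.inl = (D.ext.map Sum.inl).map _
    erw [List.map_map]; apply List.map_congr_left; intro v _; rfl

end Den

namespace HG

variable {α : Type u}

/-- Left congruence: replacement transported along an isomorphism of host graphs. -/
theorem repl_iso_exists {G G' : HG α} (hiso : Iso G G') (e' : G'.E) (M : HG α)
    (h' : (G'.att e').length = M.ext.length) :
    ∃ (e : G.E) (h : (G.att e).length = M.ext.length),
      G.lab e = G'.lab e' ∧ Iso (G.repl e M h) (G'.repl e' M h') := by
  classical
  obtain ⟨fV, fE, hatt, hlab, hext⟩ := hiso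
  have hinj : Function.Injective fV := fV.injective
  refine ⟨fE.symm e', ?_, ?_, ?_⟩
  · have := hatt (fE.symm e')
    erw [Equiv.apply_symm_apply] at this
    erw [this] at h'; simpa using h'
  · have := hlab (fE.symm e')
    erw [Equiv.apply_symm_apply] at this
    exact this.symm
  set e := fE.symm e' with he
  have hee : fE e = e' := fE.apply_symm_apply e'
  have hatt' : G'.att e' = (G.att e).map fV := by erw [← hee]; exact hatt e
  refine ⟨Equiv.sumCongr fV (Equiv.refl _),
    Equiv.sumCongr (fE.subtypeEquiv (fun a => by
      constructor
      · intro ha hc; exact ha (by erw [← hee] at hc; exact fE.injective hc)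
      · intro ha hc; exact ha (by erw [hc, hee]))) (Equiv.refl _),
    fun ed => ?_, fun ed => ?_, ?_⟩
  · rcases ed with a|m
    · show (G'.att (fE a.1)).map Sum.inl = ((G.att a.1).map Sum.inl).map _
      erw [hatt a.1, List.map_map, List.map_map]
      apply List.map_congr_left; intro v _; rfl
    · show (M.att m).map _ = ((M.att m).map _).map _
      erw [List.map_map]
      apply List.map_congr_left; intro v _
      unfold Function.comp; beta_reduce
      by_cases hm : v ∈ M.ext
      · erw [dif_pos hm, dif_pos hm]
        refine congrArg Sum.inl ?_
        erw [get_list_congr hatt']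
        simp [List.get_eq_getElem, he]
      · erw [dif_neg hm, dif_neg hm]; rfl
  · rcases ed with a|m
    · exact hlab a.1
    · rfl
  · show G'.ext.map Sum.inl = (G.ext.map Sum.inl).map _
    erw [hext, List.map_map, List.map_map]
    apply List.map_congr_left; intro v _; rfl

end HG
section MapInl
variable {β γ : Type*}

theorem inl_mem_map_inl_iff (v : β) (l : List β) :
    (Sum.inl v : β ⊕ γ) ∈ l.map Sum.inl ↔ v ∈ l := by simp

theorem inr_not_mem_map_inl (x : γ) (l : List β) :
    (Sum.inr x : β ⊕ γ) ∉ l.map Sum.inl := by simp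

theorem cIdx_inl (v : β) (l : List β) :
    cIdx (Sum.inl v : β ⊕ γ) (l.map Sum.inl) = cIdx v l :=
  cIdx_map Sum.inl_injective l v

end MapInl

namespace Den

variable {α : Type u}

theorem fill_repl_iso (D : Den α) (H : HG α) (h : D.hole.length = H.ext.length)
    (e₀ : H.E) (M : HG α) (hM : (H.att e₀).length = M.ext.length)
    (h1 : (((D.fill H h).att (Sum.inr e₀)).length = M.ext.length))
    (h2 : D.hole.length = (H.repl e₀ M hM).ext.length) :
    HG.Iso ((D.fill H h).repl (Sum.inr e₀) M h1) (D.fill (H.repl e₀ M hM) h2) := by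
  classical
  refine ⟨⟨fun x => match x with
      | Sum.inl (Sum.inl d) => Sum.inl d
      | Sum.inl (Sum.inr ⟨v, hv⟩) => Sum.inr ⟨Sum.inl v, by
          show ¬ _ ∈ H.ext.map Sum.inl
          rw [inl_mem_map_inl_iff]; exact hv⟩
      | Sum.inr m => Sum.inr ⟨Sum.inr m, inr_not_mem_map_inl m H.ext⟩,
    fun x => match x with
      | Sum.inl d => Sum.inl (Sum.inl d)
      | Sum.inr ⟨Sum.inl v, hw⟩ => Sum.inl (Sum.inr ⟨v, by
          erw [show (H.repl e₀ M hM).ext = H.ext.map Sum.inl from rfl,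
            inl_mem_map_inl_iff] at hw; exact hw⟩)
      | Sum.inr ⟨Sum.inr m, _⟩ => Sum.inr m,
    by rintro ((d|⟨v, hv⟩)|m) <;> rfl,
    by rintro (d|⟨(v|m), hw⟩) <;> rfl⟩,
    ⟨fun x => match x with
      | Sum.inl ⟨Sum.inl d, _⟩ => Sum.inl d
      | Sum.inl ⟨Sum.inr f, hf⟩ => Sum.inr (Sum.inl ⟨f, fun hc => hf (by rw [hc])⟩)
      | Sum.inr m => Sum.inr (Sum.inr m),
    fun x => match x with
      | Sum.inl d => Sum.inl ⟨Sum.inl d, fun hc => by simp at hc⟩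
      | Sum.inr (Sum.inl ⟨f, hf⟩) => Sum.inl ⟨Sum.inr f, fun hc => hf (Sum.inr_injective hc)⟩
      | Sum.inr (Sum.inr m) => Sum.inr m,
    by rintro (⟨(d|f), hf⟩|m) <;> rfl,
    by rintro (d|(⟨f, hf⟩|m)) <;> rfl⟩,
    fun ed => ?_, fun ed => ?_, ?_⟩
  · rcases ed with ⟨(d|f), hf⟩|m
    · simp only [Equiv.coe_fn_mk]; simp only [Den.fill, HG.repl, List.map_map]
      apply List.map_congr_left; intro v _; rfl
    · simp only [Equiv.coe_fn_mk]; simp only [Den.fill, HG.repl, List.map_map]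
      apply List.map_congr_left; intro v _
      simp only [Function.comp_apply]
      by_cases hm : v ∈ H.ext
      · rw [dif_pos hm, dif_pos ((inl_mem_map_inl_iff v H.ext).mpr hm)]
        exact congrArg Sum.inl (get_congr _ (cIdx_inl v H.ext) _)
      · rw [dif_neg hm, dif_neg (fun hc => hm ((inl_mem_map_inl_iff v H.ext).mp hc))]; rfl
    · simp only [Equiv.coe_fn_mk]; simp only [Den.fill, HG.repl, List.map_map]
      apply List.map_congr_left; intro u _
      simp only [Function.comp_apply]
      by_cases hu : u ∈ M.ext
      · rw [dif_pos hu, dif_pos hu]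
        by_cases hw : (H.att e₀).get ⟨cIdx u M.ext, by
            rw [hM]; exact cIdx_lt hu⟩ ∈ H.ext
        · rw [dif_pos ((inl_mem_map_inl_iff _ H.ext).mpr hw), get_map', dif_pos hw]
          exact congrArg Sum.inl (get_congr _ (cIdx_inl _ H.ext) _)
        · rw [dif_neg (fun hc => hw ((inl_mem_map_inl_iff _ H.ext).mp hc)),
            get_map', dif_neg hw]; rfl
      · rw [dif_neg hu, dif_neg hu, dif_neg (inr_not_mem_map_inl _ _)]; rfl
  · rcases ed with ⟨(d|f), hf⟩|m <;> rfl
  · simp only [Equiv.coe_fn_mk]; simp only [Den.fill, HG.repl, List.map_map]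
    apply List.map_congr_left; intro v _; rfl

end Den
namespace HG

variable {α : Type u}

theorem repl_assoc_iso (G : HG α) (e : G.E) (K : HG α)
    (hK : (G.att e).length = K.ext.length)
    (g : K.E) (X : HG α) (hg : (K.att g).length = X.ext.length)
    (h1 : (G.att e).length = (K.repl g X hg).ext.length)
    (h2 : ((G.repl e K hK).att (Sum.inr g)).length = X.ext.length) :
    HG.Iso (G.repl e (K.repl g X hg) h1) ((G.repl e K hK).repl (Sum.inr g) X h2) := by
  classical
  refine ⟨⟨fun x => match x with
      | Sum.inl v => Sum.inl (Sum.inl v)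
      | Sum.inr ⟨Sum.inl k, hk⟩ => Sum.inl (Sum.inr ⟨k, fun hc => hk
          ((inl_mem_map_inl_iff k K.ext).mpr hc)⟩)
      | Sum.inr ⟨Sum.inr x, _⟩ => Sum.inr x,
    fun x => match x with
      | Sum.inl (Sum.inl v) => Sum.inl v
      | Sum.inl (Sum.inr ⟨k, hk⟩) => Sum.inr ⟨Sum.inl k, fun hc => hk
          ((inl_mem_map_inl_iff k K.ext).mp hc)⟩
      | Sum.inr x => Sum.inr ⟨Sum.inr x, inr_not_mem_map_inl x K.ext⟩,
    by rintro (v|⟨(k|x), hk⟩) <;> rfl,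
    by rintro ((v|⟨k, hk⟩)|x) <;> rfl⟩,
    ⟨fun p => match p with
      | Sum.inl ⟨a, ha⟩ => Sum.inl ⟨Sum.inl ⟨a, ha⟩, fun hc => by simp at hc⟩
      | Sum.inr (Sum.inl ⟨k, hk⟩) => Sum.inl ⟨Sum.inr k, fun hc => hk (Sum.inr_injective hc)⟩
      | Sum.inr (Sum.inr x) => Sum.inr x,
    fun p => match p with
      | Sum.inl ⟨Sum.inl ⟨a, ha⟩, _⟩ => Sum.inl ⟨a, ha⟩
      | Sum.inl ⟨Sum.inr k, hb⟩ => Sum.inr (Sum.inl ⟨k, fun hc => hb (by rw [hc])⟩)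
      | Sum.inr x => Sum.inr (Sum.inr x),
    by rintro (⟨a, ha⟩|(⟨k, hk⟩|x)) <;> rfl,
    by rintro (⟨(⟨a, ha⟩|k), hb⟩|x) <;> rfl⟩,
    fun p => ?_, fun p => ?_, ?_⟩
  · rcases p with ⟨a, ha⟩|(⟨k, hk⟩|x)
    · simp only [Equiv.coe_fn_mk]; simp only [HG.repl, List.map_map]
      apply List.map_congr_left; intro v _; rfl
    · simp only [Equiv.coe_fn_mk]; simp only [HG.repl, List.map_map]
      apply List.map_congr_left; intro v _
      simp only [Function.comp_apply]
      by_cases hm : v ∈ K.ext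
      · rw [dif_pos hm, dif_pos ((inl_mem_map_inl_iff v K.ext).mpr hm)]
        exact congrArg (fun z => Sum.inl (Sum.inl z))
          (get_congr _ (cIdx_inl v K.ext) _).symm
      · rw [dif_neg hm, dif_neg (fun hc => hm ((inl_mem_map_inl_iff v K.ext).mp hc))]
    · simp only [Equiv.coe_fn_mk]; simp only [HG.repl, List.map_map]
      apply List.map_congr_left; intro u _
      simp only [Function.comp_apply]
      by_cases hu : u ∈ X.ext
      · rw [dif_pos hu, dif_pos hu, get_map']
        by_cases hw : (K.att g).get ⟨cIdx u X.ext, by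
            rw [hg]; exact cIdx_lt hu⟩ ∈ K.ext
        · rw [dif_pos hw, dif_pos ((inl_mem_map_inl_iff _ K.ext).mpr hw)]
          exact congrArg (fun z => Sum.inl (Sum.inl z))
            (get_congr _ (cIdx_inl _ K.ext) _).symm
        · rw [dif_neg hw,
            dif_neg (fun hc => hw ((inl_mem_map_inl_iff _ K.ext).mp hc))]
      · rw [dif_neg hu, dif_neg hu, dif_neg (inr_not_mem_map_inl _ _)]
  · rcases p with ⟨a, ha⟩|(⟨k, hk⟩|x) <;> rfl
  · simp only [Equiv.coe_fn_mk]; simp only [HG.repl, List.map_map]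
    apply List.map_congr_left; intro v _; rfl

theorem repl_comm_iso (G : HG α) (e e₀ : G.E) (X M : HG α)
    (hX : (G.att e).length = X.ext.length) (hM : (G.att e₀).length = M.ext.length)
    (ne1 : e₀ ≠ e) (ne2 : e ≠ e₀)
    (h1 : ((G.repl e X hX).att (Sum.inl ⟨e₀, ne1⟩)).length = M.ext.length)
    (h2 : ((G.repl e₀ M hM).att (Sum.inl ⟨e, ne2⟩)).length = X.ext.length) :
    HG.Iso ((G.repl e X hX).repl (Sum.inl ⟨e₀, ne1⟩) M h1)
      ((G.repl e₀ M hM).repl (Sum.inl ⟨e, ne2⟩) X h2) := by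
  classical
  refine ⟨⟨fun x => match x with
      | Sum.inl (Sum.inl v) => Sum.inl (Sum.inl v)
      | Sum.inl (Sum.inr y) => Sum.inr y
      | Sum.inr m => Sum.inl (Sum.inr m),
    fun x => match x with
      | Sum.inl (Sum.inl v) => Sum.inl (Sum.inl v)
      | Sum.inl (Sum.inr m) => Sum.inr m
      | Sum.inr y => Sum.inl (Sum.inr y),
    by rintro ((v|y)|m) <;> rfl,
    by rintro ((v|m)|y) <;> rfl⟩,
    ⟨fun p => match p with
      | Sum.inl ⟨Sum.inl ⟨a, ha⟩, hb⟩ =>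
          Sum.inl ⟨Sum.inl ⟨a, fun hc => hb (by cases hc; rfl)⟩,
            fun hc => ha (congrArg Subtype.val (Sum.inl_injective hc))⟩
      | Sum.inl ⟨Sum.inr x, _⟩ => Sum.inr x
      | Sum.inr m => Sum.inl ⟨Sum.inr m, fun hc => by simp at hc⟩,
    fun p => match p with
      | Sum.inl ⟨Sum.inl ⟨a, ha⟩, hb⟩ =>
          Sum.inl ⟨Sum.inl ⟨a, fun hc => hb (by cases hc; rfl)⟩,
            fun hc => ha (congrArg Subtype.val (Sum.inl_injective hc))⟩
      | Sum.inl ⟨Sum.inr m, _⟩ => Sum.inr m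
      | Sum.inr x => Sum.inl ⟨Sum.inr x, fun hc => by simp at hc⟩,
    by rintro (⟨(⟨a, ha⟩|x), hb⟩|m) <;> rfl,
    by rintro (⟨(⟨a, ha⟩|m), hb⟩|x) <;> rfl⟩,
    fun p => ?_, fun p => ?_, ?_⟩
  · rcases p with ⟨(⟨a, ha⟩|x), hb⟩|m
    · simp only [Equiv.coe_fn_mk]; simp only [HG.repl, List.map_map]
      apply List.map_congr_left; intro v _; rfl
    · simp only [Equiv.coe_fn_mk]; simp only [HG.repl, List.map_map]
      apply List.map_congr_left; intro u _
      simp only [Function.comp_apply]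
      by_cases hu : u ∈ X.ext
      · rw [dif_pos hu, dif_pos hu, get_map']
      · rw [dif_neg hu, dif_neg hu]
    · simp only [Equiv.coe_fn_mk]; simp only [HG.repl, List.map_map]
      apply List.map_congr_left; intro u _
      simp only [Function.comp_apply]
      by_cases hu : u ∈ M.ext
      · rw [dif_pos hu, dif_pos hu, get_map']
      · rw [dif_neg hu, dif_neg hu]
  · rcases p with ⟨(⟨a, ha⟩|x), hb⟩|m <;> rfl
  · simp only [Equiv.coe_fn_mk]; simp only [HG.repl, List.map_map]
    apply List.map_congr_left; intro v _; rfl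

end HG
namespace HG

variable {α : Type u}

/-- Conditional replacement: isomorphic to `Y.repl (f hp) X` when `hp : P`, and to `Y`
when `¬ P`, with a cast-free uniform carrier. -/
noncomputable def condRepl (Y : HG α) (P : Prop) (f : P → Y.E) (X : HG α)
    (hX : ∀ hp : P, (Y.att (f hp)).length = X.ext.length) : HG α where
  V := Y.V ⊕ (PLift P × {v : X.V // v ∉ X.ext})
  E := {g : Y.E // ∀ hp : P, g ≠ f hp} ⊕ (PLift P × X.E)
  att := fun p =>
    match p with
    | Sum.inl g => (Y.att g.1).map Sum.inl
    | Sum.inr (⟨hp⟩, x) => (X.att x).map fun v =>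
        letI : DecidableEq X.V := Classical.decEq _
        if hv : v ∈ X.ext then
          Sum.inl ((Y.att (f hp)).get ⟨X.ext.idxOf v, by
            rw [hX hp]; exact List.idxOf_lt_length_iff.mpr hv⟩)
        else Sum.inr (⟨hp⟩, ⟨v, hv⟩)
  lab := fun p =>
    match p with
    | Sum.inl g => Y.lab g.1
    | Sum.inr (_, x) => X.lab x
  ext := Y.ext.map Sum.inl

theorem condRepl_iso_false (Y : HG α) {P : Prop} (hP : ¬P) (f : P → Y.E) (X : HG α)
    (hX : ∀ hp : P, (Y.att (f hp)).length = X.ext.length) :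
    Iso Y (condRepl Y P f X hX) := by
  refine ⟨⟨Sum.inl, fun x => match x with
      | Sum.inl v => v
      | Sum.inr (⟨hp⟩, _) => (hP hp).elim,
    fun v => rfl, by rintro (v|⟨⟨hp⟩, x⟩) <;> first | rfl | exact absurd hp hP⟩,
    ⟨fun g => Sum.inl ⟨g, fun hp => (hP hp).elim⟩, fun p => match p with
      | Sum.inl g => g.1
      | Sum.inr (⟨hp⟩, _) => (hP hp).elim,
    fun g => rfl, by rintro (⟨g, hg⟩|⟨⟨hp⟩, x⟩) <;> first | rfl | exact absurd hp hP⟩,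
    fun g => rfl, fun g => rfl, rfl⟩

theorem condRepl_iso_true (Y : HG α) {P : Prop} (hp : P) (f : P → Y.E) (X : HG α)
    (hX : ∀ hp : P, (Y.att (f hp)).length = X.ext.length)
    (h2 : (Y.att (f hp)).length = X.ext.length) :
    Iso (Y.repl (f hp) X h2) (condRepl Y P f X hX) := by
  refine ⟨⟨fun x => match x with
      | Sum.inl v => Sum.inl v
      | Sum.inr x => Sum.inr (⟨hp⟩, x),
    fun x => match x with
      | Sum.inl v => Sum.inl v
      | Sum.inr (_, x) => Sum.inr x,
    by rintro (v|x) <;> rfl, by rintro (v|⟨⟨hp'⟩, x⟩) <;> rfl⟩,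
    ⟨fun p => match p with
      | Sum.inl ⟨g, hg⟩ => Sum.inl ⟨g, fun _ => hg⟩
      | Sum.inr x => Sum.inr (⟨hp⟩, x),
    fun p => match p with
      | Sum.inl ⟨g, hg⟩ => Sum.inl ⟨g, hg hp⟩
      | Sum.inr (_, x) => Sum.inr x,
    by rintro (⟨g, hg⟩|x) <;> rfl, by rintro (⟨g, hg⟩|⟨⟨hp'⟩, x⟩) <;> rfl⟩,
    fun p => ?_, fun p => ?_, ?_⟩
  · rcases p with ⟨g, hg⟩|x
    · simp only [Equiv.coe_fn_mk]; simp only [HG.repl, condRepl, List.map_map]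
      apply List.map_congr_left; intro v _; rfl
    · simp only [Equiv.coe_fn_mk]; simp only [HG.repl, condRepl, List.map_map]
      apply List.map_congr_left; intro v _
      simp only [Function.comp_apply]
      by_cases hv : v ∈ X.ext
      · rw [dif_pos hv, dif_pos hv]
      · rw [dif_neg hv, dif_neg hv]
  · rcases p with ⟨g, hg⟩|x <;> rfl
  · simp only [Equiv.coe_fn_mk]; simp only [HG.repl, condRepl, List.map_map]
    apply List.map_congr_left; intro v _; rfl

/-- Update of a family of hypergraphs at one index, replacing an edge by `X`,
with a cast-free carrier. -/
noncomputable def updF {ι : Type*} (F : ι → HG α) (d : ι) (f : (F d).E) (X : HG α)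
    (hfx : ((F d).att f).length = X.ext.length) (e : ι) : HG α :=
  condRepl (F e) (e = d) (fun hp => cast (congrArg (fun z => HG.E (F z)) hp.symm) f) X
    (fun hp => by subst hp; exact hfx)

theorem updF_ext_len {ι : Type*} (F : ι → HG α) (d : ι) (f : (F d).E) (X : HG α)
    (hfx : ((F d).att f).length = X.ext.length) (e : ι) :
    (updF F d f X hfx e).ext.length = (F e).ext.length := by
  simp [updF, condRepl]

theorem iso_updF_of_ne {ι : Type*} (F : ι → HG α) (d : ι) (f : (F d).E) (X : HG α)
    (hfx : ((F d).att f).length = X.ext.length) (e : ι) (he : e ≠ d) :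
    Iso (F e) (updF F d f X hfx e) :=
  condRepl_iso_false _ he _ _ _

theorem iso_updF_of_eq {ι : Type*} (F : ι → HG α) (d : ι) (f : (F d).E) (X : HG α)
    (hfx : ((F d).att f).length = X.ext.length) :
    Iso ((F d).repl f X hfx) (updF F d f X hfx d) :=
  condRepl_iso_true (F d) rfl _ X _ hfx

theorem updF_lab {ι : Type*} (F : ι → HG α) (d : ι) (f : (F d).E) (X : HG α)
    (hfx : ((F d).att f).length = X.ext.length) (e : ι)
    (g : {g : (F e).E // ∀ hp : e = d, g ≠ cast (congrArg (fun z => HG.E (F z)) hp.symm) f}) :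
    (updF F d f X hfx e).lab (Sum.inl g) = (F e).lab g.1 := rfl

end HG
namespace HG

variable {α : Type u}

theorem replAll_updF (M' : HG α) (F : M'.E → HG α)
    (h : ∀ e, (M'.att e).length = (F e).ext.length)
    (d : M'.E) (f : (F d).E) (X : HG α)
    (hfx : ((F d).att f).length = X.ext.length)
    (h₀ : ∀ e, (M'.att e).length = (updF F d f X hfx e).ext.length)
    (hX : ((M'.replAll F h).att ⟨d, f⟩).length = X.ext.length) :
    Iso (M'.replAll (updF F d f X hfx) h₀) ((M'.replAll F h).repl ⟨d, f⟩ X hX) := by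
  classical
  refine ⟨⟨fun x => match x with
      | Sum.inl v => Sum.inl (Sum.inl v)
      | Sum.inr ⟨e, ⟨Sum.inl v, hw⟩⟩ => Sum.inl (Sum.inr ⟨e, ⟨v, fun hc => hw
          ((inl_mem_map_inl_iff v (F e).ext).mpr hc)⟩⟩)
      | Sum.inr ⟨e, ⟨Sum.inr (⟨hp⟩, x), _⟩⟩ => Sum.inr x,
    fun x => match x with
      | Sum.inl (Sum.inl v) => Sum.inl v
      | Sum.inl (Sum.inr ⟨e, v⟩) => Sum.inr ⟨e, ⟨Sum.inl v.1, fun hc => v.2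
          ((inl_mem_map_inl_iff v.1 (F e).ext).mp hc)⟩⟩
      | Sum.inr x => Sum.inr ⟨d, ⟨Sum.inr (⟨rfl⟩, x), inr_not_mem_map_inl _ _⟩⟩,
    by rintro (v|⟨e, (v|⟨⟨hp⟩, x⟩), hw⟩)
       · rfl
       · rfl
       · subst hp; rfl,
    by rintro ((v|⟨e, v, hv⟩)|x) <;> rfl⟩,
    ⟨fun p => match p with
      | ⟨e, Sum.inl ⟨g, hg⟩⟩ => Sum.inl ⟨⟨e, g⟩, fun hc => by
          have he : e = d := congrArg Sigma.fst hc
          subst he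
          exact hg rfl (eq_of_heq (Sigma.mk.inj_iff.mp hc).2)⟩
      | ⟨e, Sum.inr (⟨hp⟩, x)⟩ => Sum.inr x,
    fun p => match p with
      | Sum.inl ⟨⟨e, g⟩, hne⟩ => ⟨e, Sum.inl ⟨g, fun hp => by
          subst hp
          intro hgf
          exact hne (by erw [hgf]; exact rfl)⟩⟩
      | Sum.inr x => ⟨d, Sum.inr (⟨rfl⟩, x)⟩,
    by rintro ⟨e, (⟨g, hg⟩|⟨⟨hp⟩, x⟩)⟩
       · rfl
       · subst hp; rfl,
    by rintro (⟨⟨e, g⟩, hne⟩|x) <;> rfl⟩,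
    fun p => ?_, fun p => ?_, ?_⟩
  · rcases p with ⟨e, (⟨g, hg⟩|⟨⟨hp⟩, x⟩)⟩
    · simp only [Equiv.coe_fn_mk]; simp only [HG.repl, HG.replAll, updF, condRepl, List.map_map]
      apply List.map_congr_left; intro v _
      simp only [Function.comp_apply]
      by_cases hv : v ∈ (F e).ext
      · erw [dif_pos hv, dif_pos ((inl_mem_map_inl_iff v (F e).ext).mpr hv)]
        exact congrArg (fun z => Sum.inl (Sum.inl z))
          (get_congr _ (cIdx_inl v (F e).ext) _).symm
      · erw [dif_neg hv, dif_neg (fun hc => hv ((inl_mem_map_inl_iff v (F e).ext).mp hc))]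
    · subst hp
      simp only [Equiv.coe_fn_mk]; simp only [HG.repl, HG.replAll, updF, condRepl, List.map_map]
      apply List.map_congr_left; intro u _
      simp only [Function.comp_apply, cast_eq]
      by_cases hu : u ∈ X.ext
      · rw [dif_pos hu, dif_pos hu, get_map']
        by_cases hw : ((F e).att f).get ⟨cIdx u X.ext, by
            erw [hfx]; exact cIdx_lt hu⟩ ∈ (F e).ext
        · erw [dif_pos hw, dif_pos ((inl_mem_map_inl_iff _ (F e).ext).mpr hw)]
          exact congrArg (fun z => Sum.inl (Sum.inl z))
            (get_congr _ (cIdx_inl _ (F e).ext) _).symm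
        · erw [dif_neg hw,
            dif_neg (fun hc => hw ((inl_mem_map_inl_iff _ (F e).ext).mp hc))]
      · rw [dif_neg hu, dif_neg hu]; erw [dif_neg (inr_not_mem_map_inl _ _)]
  · rcases p with ⟨e, (⟨g, hg⟩|⟨⟨hp⟩, x⟩)⟩
    · rfl
    · subst hp; rfl
  · simp only [Equiv.coe_fn_mk]; simp only [HG.repl, HG.replAll, List.map_map]
    apply List.map_congr_left; intro v _; rfl

end HG
namespace Den

variable {α : Type u}

theorem expand_updF (D : Den α) (t : α) (F : D.E → HG α)
    (hF : ∀ e, (D.att e).length = (F e).ext.length)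
    (d : D.E) (f : (F d).E) (X : HG α)
    (hfx : ((F d).att f).length = X.ext.length)
    (h₀ : ∀ e, (D.att e).length = (HG.updF F d f X hfx e).ext.length)
    (hX : ((D.expand t F hF).att (Sum.inr ⟨d, f⟩)).length = X.ext.length) :
    HG.Iso (D.expand t (HG.updF F d f X hfx) h₀)
      ((D.expand t F hF).repl (Sum.inr ⟨d, f⟩) X hX) := by
  classical
  refine ⟨⟨fun x => match x with
      | Sum.inl v => Sum.inl (Sum.inl v)
      | Sum.inr ⟨e, ⟨Sum.inl v, hw⟩⟩ => Sum.inl (Sum.inr ⟨e, ⟨v, fun hc => hw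
          ((inl_mem_map_inl_iff v (F e).ext).mpr hc)⟩⟩)
      | Sum.inr ⟨e, ⟨Sum.inr (⟨hp⟩, x), _⟩⟩ => Sum.inr x,
    fun x => match x with
      | Sum.inl (Sum.inl v) => Sum.inl v
      | Sum.inl (Sum.inr ⟨e, v⟩) => Sum.inr ⟨e, ⟨Sum.inl v.1, fun hc => v.2
          ((inl_mem_map_inl_iff v.1 (F e).ext).mp hc)⟩⟩
      | Sum.inr x => Sum.inr ⟨d, ⟨Sum.inr (⟨rfl⟩, x), inr_not_mem_map_inl _ _⟩⟩,
    by rintro (v|⟨e, (v|⟨⟨hp⟩, x⟩), hw⟩)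
       · rfl
       · rfl
       · subst hp; rfl,
    by rintro ((v|⟨e, v, hv⟩)|x) <;> rfl⟩,
    ⟨fun p => match p with
      | Sum.inl u => Sum.inl ⟨Sum.inl u, fun hc => by simp at hc⟩
      | Sum.inr ⟨e, Sum.inl ⟨g, hg⟩⟩ => Sum.inl ⟨Sum.inr ⟨e, g⟩, fun hc => by
          have hc2 : (⟨e, g⟩ : Σ e, (F e).E) = ⟨d, f⟩ := Sum.inr_injective hc
          have he : e = d := congrArg Sigma.fst hc2
          subst he
          exact hg rfl (eq_of_heq (Sigma.mk.inj_iff.mp hc2).2)⟩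
      | Sum.inr ⟨e, Sum.inr (⟨hp⟩, x)⟩ => Sum.inr x,
    fun p => match p with
      | Sum.inl ⟨Sum.inl u, _⟩ => Sum.inl u
      | Sum.inl ⟨Sum.inr ⟨e, g⟩, hne⟩ => Sum.inr ⟨e, Sum.inl ⟨g, fun hp => by
          subst hp
          intro hgf
          exact hne (by erw [hgf]; exact rfl)⟩⟩
      | Sum.inr x => Sum.inr ⟨d, Sum.inr (⟨rfl⟩, x)⟩,
    by rintro (u|⟨e, (⟨g, hg⟩|⟨⟨hp⟩, x⟩)⟩)
       · rfl
       · rfl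
       · subst hp; rfl,
    by rintro (⟨(u|⟨e, g⟩), hne⟩|x) <;> rfl⟩,
    fun p => ?_, fun p => ?_, ?_⟩
  · rcases p with u|⟨e, (⟨g, hg⟩|⟨⟨hp⟩, x⟩)⟩
    · simp only [Equiv.coe_fn_mk]; simp only [HG.repl, Den.expand, List.map_map]
      apply List.map_congr_left; intro v _; rfl
    · simp only [Equiv.coe_fn_mk]; simp only [HG.repl, Den.expand, HG.updF, HG.condRepl, List.map_map]
      apply List.map_congr_left; intro v _
      simp only [Function.comp_apply]
      by_cases hv : v ∈ (F e).ext
      · erw [dif_pos hv, dif_pos ((inl_mem_map_inl_iff v (F e).ext).mpr hv)]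
        exact congrArg (fun z => Sum.inl (Sum.inl z))
          (get_congr _ (cIdx_inl v (F e).ext) _).symm
      · erw [dif_neg hv, dif_neg (fun hc => hv ((inl_mem_map_inl_iff v (F e).ext).mp hc))]
    · subst hp
      simp only [Equiv.coe_fn_mk]; simp only [HG.repl, Den.expand, HG.updF, HG.condRepl, List.map_map]
      apply List.map_congr_left; intro u _
      simp only [Function.comp_apply, cast_eq]
      by_cases hu : u ∈ X.ext
      · rw [dif_pos hu, dif_pos hu, get_map']
        by_cases hw : ((F e).att f).get ⟨cIdx u X.ext, by
            erw [hfx]; exact cIdx_lt hu⟩ ∈ (F e).ext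
        · erw [dif_pos hw, dif_pos ((inl_mem_map_inl_iff _ (F e).ext).mpr hw)]
          exact congrArg (fun z => Sum.inl (Sum.inl z))
            (get_congr _ (cIdx_inl _ (F e).ext) _).symm
        · erw [dif_neg hw,
            dif_neg (fun hc => hw ((inl_mem_map_inl_iff _ (F e).ext).mp hc))]
      · rw [dif_neg hu, dif_neg hu]; erw [dif_neg (inr_not_mem_map_inl _ _)]
  · rcases p with u|⟨e, (⟨g, hg⟩|⟨⟨hp⟩, x⟩)⟩
    · rfl
    · rfl
    · subst hp; rfl
  · simp only [Equiv.coe_fn_mk]; simp only [HG.repl, Den.expand, List.map_map]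
    apply List.map_congr_left; intro v _; rfl

end Den

theorem HL_rev_mul {G : HG HLTp} {C : HLTp} (hd : HL G C) :
    ∀ (e₀ : G.E) (M : HG HLTp), G.lab e₀ = HLTp.mul M →
      ∀ h : (G.att e₀).length = M.ext.length, HL (G.repl e₀ M h) C := by
  induction hd with
  | ax p k =>
      intro e₀ M hlab h
      exact absurd hlab (by simp [HLTp.handle])
  | div_l H A e N' D' F hlab hrepl hF hH hFd ihH ihF =>
      intro e₀ M hlab₀ h
      rcases e₀ with ⟨e', ne'⟩|(u|⟨dd, ff⟩)
      · have hlen : (H.att e').length = M.ext.length := by simpa [HG.repl] using h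
        have base := ihH e' M hlab₀ hlen
        have ne2 : e ≠ e' := fun hc => ne' hc.symm
        have step := HL.div_l (H.repl e' M hlen) A (Sum.inl ⟨e, ne2⟩) N' D' F hlab
          (by simpa [HG.repl] using hrepl) hF base hFd
        exact HL.iso _ _ _ (HG.iso_symm
          (HG.repl_comm_iso H e e' (D'.expand (HLTp.div N' D') F hF) M
            (by simpa [Den.expand] using hrepl) hlen ne' ne2 h
            (by simpa [HG.repl, Den.expand] using hrepl))) step
      · exact absurd hlab₀ (by simp [HG.repl, Den.expand])
      · have hlen : ((F dd).att ff).length = M.ext.length := by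
          simpa [HG.repl, Den.expand] using h
        have base := ihF dd ff M hlab₀ hlen
        have hF₀ : ∀ d, (D'.att d).length = (HG.updF F dd ff M hlen d).ext.length :=
          fun d => by rw [HG.updF_ext_len]; exact hF d
        have hall₀ : ∀ d, HL (HG.updF F dd ff M hlen d) (D'.lab d) := by
          intro d
          by_cases hd : d = dd
          · subst hd
            exact HL.iso _ _ _ (HG.iso_updF_of_eq F d ff M hlen) base
          · exact HL.iso _ _ _ (HG.iso_updF_of_ne F dd ff M hlen d hd) (hFd d)
        have step := HL.div_l H A e N' D' (HG.updF F dd ff M hlen) hlab hrepl hF₀ hH hall₀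
        have i1 := Den.expand_updF D' (HLTp.div N' D') F hF dd ff M hlen hF₀
          (by simpa [Den.expand] using hlen)
        have i2 := HG.repl_iso_right H e i1 (by simpa [Den.expand] using hrepl)
          (by simpa [HG.repl, Den.expand] using hrepl)
        have i3 := HG.repl_assoc_iso H e (D'.expand (HLTp.div N' D') F hF)
          (by simpa [Den.expand] using hrepl) (Sum.inr ⟨dd, ff⟩) M
          (by simpa [Den.expand] using hlen)
          (by simpa [HG.repl, Den.expand] using hrepl)
          (by simpa [HG.repl, Den.expand] using hlen)
        exact HL.iso _ _ _ i3 (HL.iso _ _ _ i2 step)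
  | div_r N' D' F h' hprem ih =>
      intro e₀ M hlab₀ h
      have base := ih (Sum.inr e₀) M hlab₀ (by simpa [Den.fill] using h)
      refine HL.div_r N' D' _ (by simpa [HG.repl] using h') ?_
      exact HL.iso _ _ _ (Den.fill_repl_iso D' F h' e₀ M h _ _) base
  | mul_l G A e M' hlab' h' hprem ih =>
      intro e₀ M hlab₀ h
      by_cases hee : e = e₀
      · subst hee
        have hMM : M' = M := by
          have := hlab'.symm.trans hlab₀
          injection this
        subst hMM
        exact hprem
      · refine HL.mul_l _ A (Sum.inl ⟨e, hee⟩) M' hlab' (by simpa [HG.repl] using h') ?_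
        exact HL.iso _ _ _
          (HG.repl_comm_iso G e e₀ M' M h' h (Ne.symm hee) hee
            (by simpa [HG.repl] using h) (by simpa [HG.repl] using h'))
          (ih (Sum.inl ⟨e₀, Ne.symm hee⟩) M hlab₀ (by simpa [HG.repl] using h))
  | mul_r M' F hFlen hall ih =>
      intro e₀ M hlab₀ h
      obtain ⟨dd, ff⟩ := e₀
      have hlen : ((F dd).att ff).length = M.ext.length := by
        simpa [HG.replAll] using h
      have base := ih dd ff M hlab₀ hlen
      have hF₀ : ∀ e, (M'.att e).length = (HG.updF F dd ff M hlen e).ext.length :=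
        fun e => by rw [HG.updF_ext_len]; exact hFlen e
      have hall₀ : ∀ e, HL (HG.updF F dd ff M hlen e) (M'.lab e) := by
        intro e
        by_cases hd : e = dd
        · subst hd
          exact HL.iso _ _ _ (HG.iso_updF_of_eq F e ff M hlen) base
        · exact HL.iso _ _ _ (HG.iso_updF_of_ne F dd ff M hlen e hd) (hall e)
      exact HL.iso _ _ _ (HG.replAll_updF M' F hFlen dd ff M hlen hF₀ h)
        (HL.mul_r M' (HG.updF F dd ff M hlen) hF₀ hall₀)
  | iso G G' A hiso hprem ih =>
      intro e₀ M hlab₀ h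
      obtain ⟨e, hlen, hlabeq, hiso2⟩ := HG.repl_iso_exists hiso e₀ M h
      exact HL.iso _ _ _ hiso2 (ih e M (hlabeq.trans hlab₀) hlen)

theorem HL_rev_div {G : HG HLTp} {T : HLTp} (hd : HL G T) :
    ∀ (N : HLTp) (D : Den HLTp), T = HLTp.div N D →
      ∀ h : D.hole.length = G.ext.length, HL (D.fill G h) N := by
  induction hd with
  | ax p k =>
      intro N D hT h
      exact absurd hT (by simp)
  | div_l H A e N' D' F hlab hrepl hF hH hFd ihH ihF =>
      intro N D hT h
      have hh : D.hole.length = H.ext.length := by simpa [HG.repl] using h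
      have base := ihH N D hT hh
      have step := HL.div_l (D.fill H hh) N (Sum.inr e) N' D' F hlab
        (by simpa [Den.fill] using hrepl) hF base hFd
      exact HL.iso _ _ _ (Den.fill_repl_iso D H hh e _ _ _ _) step
  | div_r N' D' F h' hprem ih =>
      intro N D hT h
      injection hT with h1 h2
      subst h1; subst h2
      exact hprem
  | mul_l G A e M' hlab' h' hprem ih =>
      intro N D hT h
      have hh : D.hole.length = (G.repl e M' h').ext.length := by simpa [HG.repl] using h
      have base := ih N D hT hh
      refine HL.mul_l (D.fill G h) N (Sum.inr e) M' hlab' (by simpa [Den.fill] using h') ?_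
      exact HL.iso _ _ _ (HG.iso_symm (Den.fill_repl_iso D G h e M' h' _ _)) base
  | mul_r M' F hFlen hall ih =>
      intro N D hT h
      exact absurd hT (by simp)
  | iso G G' A hiso hprem ih =>
      intro N D hT h
      have hlen : G'.ext.length = G.ext.length := by
        obtain ⟨fV, fE, _, _, hext⟩ := hiso
        rw [hext]; simp
      exact HL.iso _ _ _ (Den.fill_iso_right D hiso (h.trans hlen) h) (ih N D hT (h.trans hlen))


/-- Reversibility of `×` and `÷` in `HL`: (1) if `H → C` is derivable and `e₀ ∈ E_H`
is labeled `×(M)`, then `H[e₀/M] → C` is derivable; (2) if `H → N÷D` is derivable,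
then `D[e₀/H] → N` is derivable, where `e₀` is the `$`-edge of `D`. -/
theorem HL_reversibility :
    (∀ (H : HG HLTp) (C : HLTp) (e₀ : H.E) (M : HG HLTp)
      (hlab : H.lab e₀ = HLTp.mul M) (h : (H.att e₀).length = M.ext.length),
      HL H C → HL (H.repl e₀ M h) C) ∧
    (∀ (H : HG HLTp) (N : HLTp) (D : Den HLTp)
      (h : D.hole.length = H.ext.length),
      HL H (HLTp.div N D) → HL (D.fill H h) N) := ⟨fun _ _ e₀ M hlab h hd => HL_rev_mul hd e₀ M hlab h,
   fun _ N D h hd => HL_rev_div hd N D rfl h⟩
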